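/- arXiv:1809.09303 — 7 statements merged into one kernel-verified Lean document; each statement's English description precedes it below -/
import Mathlib

section
/- Let f : X → Z be a (K,L)-quasi-isometry between quasi-geodesic metric spaces. If Y ⊆ X is Q-strongly quasiconvex (every (λ,ε)-quasi-geodesic with endpoints on Y lies in the Q(λ,ε)-neighborhood of Y), then f(Y) is Q'-strongly quasiconvex in Z, where Q' depends only on Q, K, and L. -/
open Metric

/-- `(K,L)`-quasi-geodesic on the interval `[a,b]`. -/
def QuasiGeodesicOn {X : Type*} [MetricSpace X] (K L : ℝ) (γ : ℝ → X) (a b : ℝ) : Prop :=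
  ∀ s ∈ Set.Icc a b, ∀ t ∈ Set.Icc a b,
    (1 / K) * |s - t| - L ≤ dist (γ s) (γ t) ∧ dist (γ s) (γ t) ≤ K * |s - t| + L

/-- `X` is a `(K,L)`-quasi-geodesic metric space. -/
def IsQuasiGeodesicSpace (X : Type*) [MetricSpace X] (K L : ℝ) : Prop :=
  ∀ x y : X, ∃ (γ : ℝ → X) (a b : ℝ), a ≤ b ∧ QuasiGeodesicOn K L γ a b ∧ γ a = x ∧ γ b = y

/-- `Y` is strongly quasiconvex with gauge `Q`: every `(K,L)`-quasi-geodesic with endpoints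
on `Y` stays in the `Q(K,L)`-neighborhood of `Y`. -/
def StronglyQuasiconvex {X : Type*} [MetricSpace X] (Q : ℝ → ℝ → ℝ) (Y : Set X) : Prop :=
  ∀ K L : ℝ, 1 ≤ K → 0 ≤ L → ∀ (γ : ℝ → X) (a b : ℝ), a ≤ b →
    QuasiGeodesicOn K L γ a b → γ a ∈ Y → γ b ∈ Y →
    ∀ t ∈ Set.Icc a b, infDist (γ t) Y ≤ Q K L

/-- `(K,L)`-quasi-isometry: a `(K,L)`-quasi-isometric embedding with `L`-dense image. -/
def QuasiIsometry {X Z : Type*} [MetricSpace X] [MetricSpace Z] (K L : ℝ) (f : X → Z) : Prop :=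
  (∀ x y : X, (1 / K) * dist x y - L ≤ dist (f x) (f y) ∧ dist (f x) (f y) ≤ K * dist x y + L) ∧
  ∀ z : Z, ∃ x : X, dist z (f x) ≤ L

/-- Quasi-isometry invariance of strong quasiconvexity: the image of a `Q`-strongly
quasiconvex subset under a `(K,L)`-quasi-isometry is `Q'`-strongly quasiconvex, with `Q'`
depending only on `Q`, `K` and `L`. -/
theorem stronglyQuasiconvex_qi_invariant (Q : ℝ → ℝ → ℝ) (K L : ℝ) (hK : 1 ≤ K) (hL : 0 ≤ L) :
    ∃ Q' : ℝ → ℝ → ℝ,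
      ∀ (X Z : Type) [MetricSpace X] [MetricSpace Z] (KX LX KZ LZ : ℝ),
        IsQuasiGeodesicSpace X KX LX → IsQuasiGeodesicSpace Z KZ LZ →
        ∀ (f : X → Z) (Y : Set X), QuasiIsometry K L f → StronglyQuasiconvex Q Y →
          StronglyQuasiconvex Q' (f '' Y) := by
  classical
  have hKpos : (0:ℝ) < K := lt_of_lt_of_le one_pos hK
  refine ⟨fun K' L' => 2*L + K * (Q (K*K') (K*(L'+3*L)) + 1), ?_⟩
  intro X Z _ _ KX LX KZ LZ _ _ f Y hf hY
  intro K' L' hK' hL' γ a b hab hγ ha hb t ht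
  obtain ⟨hfQI, hfdense⟩ := hf
  obtain ⟨y₁, hy₁, hfy₁⟩ := ha
  obtain ⟨y₂, hy₂, hfy₂⟩ := hb
  have hK'pos : (0:ℝ) < K' := lt_of_lt_of_le one_pos hK'
  choose g hg using hfdense
  set δ : ℝ → X := fun s => if s = a then y₁ else if s = b then y₂ else g (γ s) with hδ
  have hδclose : ∀ s, dist (γ s) (f (δ s)) ≤ L := by
    intro s
    by_cases h1 : s = a
    · simp [hδ, h1, hfy₁, hL]
    by_cases h2 : s = b
    · subst h2; simp [hδ, h1, hfy₂, hL]
    · simpa [hδ, h1, h2] using hg (γ s)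
  have hδa : δ a = y₁ := by simp [hδ]
  have hδb : δ b ∈ Y := by
    by_cases h : b = a
    · simp [hδ, h, hy₁]
    · simp [hδ, h, hy₂]
  have hδQG : QuasiGeodesicOn (K*K') (K*(L'+3*L)) δ a b := by
    intro s hs u hu
    obtain ⟨hlo, hhi⟩ := hγ s hs u hu
    obtain ⟨flo, fhi⟩ := hfQI (δ s) (δ u)
    have t1 : dist (f (δ s)) (f (δ u)) ≤
        dist (f (δ s)) (γ s) + dist (γ s) (γ u) + dist (γ u) (f (δ u)) :=
      dist_triangle4 _ _ _ _
    have t2 : dist (γ s) (γ u) ≤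
        dist (γ s) (f (δ s)) + dist (f (δ s)) (f (δ u)) + dist (f (δ u)) (γ u) :=
      dist_triangle4 _ _ _ _
    have c1 := hδclose s
    have c2 := hδclose u
    have d1 : dist (f (δ s)) (γ s) = dist (γ s) (f (δ s)) := dist_comm _ _
    have d2 : dist (f (δ u)) (γ u) = dist (γ u) (f (δ u)) := dist_comm _ _
    have hKne : K ≠ 0 := hKpos.ne'
    have hK'ne : K' ≠ 0 := hK'pos.ne'
    have hinvK : (1/K) * K = 1 := one_div_mul_cancel hKne
    have hinvK' : (1/K') * K' = 1 := one_div_mul_cancel hK'ne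
    have habs : (0:ℝ) ≤ |s - u| := abs_nonneg _
    have hdnn : (0:ℝ) ≤ dist (δ s) (δ u) := dist_nonneg
    constructor
    · -- lower: (1/(K*K'))|s-u| - K(L'+3L) ≤ d
      have e1 : (1/K') * |s - u| - (L' + 3*L) ≤ K * dist (δ s) (δ u) := by
        linarith
      have e2 := mul_le_mul_of_nonneg_left e1 (by positivity : (0:ℝ) ≤ 1/K)
      have e3 : (1/K) * (K * dist (δ s) (δ u)) = dist (δ s) (δ u) := by
        field_simp
      have h1K : (1:ℝ)/(K*K') = (1/K)*(1/K') := by field_simp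
      have hKinv_le : (1:ℝ)/K ≤ K := le_trans (by
        rw [div_le_one hKpos]; exact hK) hK
      have hnn : (0:ℝ) ≤ L' + 3*L := by linarith
      rw [h1K]
      nlinarith [e2, e3, mul_le_mul_of_nonneg_right hKinv_le hnn]
    · -- upper
      have e1 : (1/K) * dist (δ s) (δ u) ≤ K' * |s - u| + L' + 3*L := by linarith
      have e2 : dist (δ s) (δ u) ≤ (K' * |s - u| + L' + 3*L) * K := by
        rw [← div_le_iff₀ hKpos]
        rw [div_eq_inv_mul, ← one_div]
        exact e1
      nlinarith [e2]
  have hQnn : (0:ℝ) ≤ K*(L'+3*L) := by nlinarith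
  have hKK1 : (1:ℝ) ≤ K*K' := by nlinarith
  have hM := hY (K*K') (K*(L'+3*L)) hKK1 hQnn δ a b hab hδQG (hδa ▸ hy₁) hδb t ht
  have hYne : Y.Nonempty := ⟨y₁, hy₁⟩
  set M := Q (K*K') (K*(L'+3*L)) with hMdef
  have : infDist (δ t) Y < M + 1 := lt_of_le_of_lt hM (lt_add_one _)
  obtain ⟨y, hy, hdy⟩ := (infDist_lt_iff hYne).mp this
  have hfd := (hfQI (δ t) y).2
  have := hδclose t
  calc infDist (γ t) (f '' Y) ≤ dist (γ t) (f y) :=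
        infDist_le_dist_of_mem ⟨y, hy, rfl⟩
    _ ≤ dist (γ t) (f (δ t)) + dist (f (δ t)) (f y) := dist_triangle _ _ _
    _ ≤ 2*L + K * (M + 1) := by nlinarith
end

section
/- Let f : X → Z be a (K,L)-quasi-isometry between quasi-geodesic metric spaces. If Y ⊆ X is an (A,D)-contracting subset of X, then f(Y) is an (A',D')-contracting subset of Z, where A' and D' depend only on A, D, K, and L. -/
open Metric

/-- A map is `(D,D)`-coarsely Lipschitz. -/
def CoarseLipschitz {X : Type*} [MetricSpace X] (D : ℝ) (g : X → X) : Prop :=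
  ∀ x y : X, dist (g x) (g y) ≤ D * dist x y + D

/-- `g : X → Y` is `(A,D)`-contracting. -/
def ContractingMap {X : Type*} [MetricSpace X] (A D : ℝ) (Y : Set X) (g : X → X) : Prop :=
  (∀ x, g x ∈ Y) ∧ CoarseLipschitz D g ∧ (∀ y ∈ Y, dist y (g y) ≤ D) ∧
  (∀ x x₁ x₂ : X, dist x x₁ ≤ A * infDist x Y → dist x x₂ ≤ A * infDist x Y →
    dist (g x₁) (g x₂) ≤ D)

lemma le_infDist_aux {α : Type*} [MetricSpace α] {s : Set α} (hs : s.Nonempty) {x : α} {b : ℝ}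
    (h : ∀ y ∈ s, b ≤ dist x y) : b ≤ infDist x s := by
  by_contra hlt
  push_neg at hlt
  obtain ⟨y, hy, hd⟩ := (infDist_lt_iff hs).1 hlt
  exact absurd (h y hy) (not_le.2 hd)

set_option maxHeartbeats 1000000 in
/-- Quasi-isometry invariance of the contracting property: the image of an `(A,D)`-contracting
subset under a `(K,L)`-quasi-isometry is `(A',D')`-contracting, with `A'`, `D'` depending only
on `A`, `D`, `K`, `L`. -/
theorem contracting_qi_invariant (A D K L : ℝ)
    (hA : 0 < A) (hA1 : A ≤ 1) (hD : 1 ≤ D) (hK : 1 ≤ K) (hL : 0 ≤ L) :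
    ∃ A' D' : ℝ, 0 < A' ∧ A' ≤ 1 ∧ 1 ≤ D' ∧
      ∀ (X Z : Type) [MetricSpace X] [MetricSpace Z] (KX LX KZ LZ : ℝ),
        IsQuasiGeodesicSpace X KX LX → IsQuasiGeodesicSpace Z KZ LZ →
        ∀ (f : X → Z) (Y : Set X), QuasiIsometry K L f →
          (∃ g : X → X, ContractingMap A D Y g) →
          ∃ g' : Z → Z, ContractingMap A' D' (f '' Y) g' := by
  have hK0 : (0:ℝ) < K := by linarith
  have hK20 : (0:ℝ) < 2 * K ^ 2 := by positivity
  have hK2 : 1 ≤ K ^ 2 := by nlinarith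
  have hKD : 1 ≤ K ^ 2 * D := by nlinarith
  have hD0 : (0:ℝ) < D := by linarith
  have e1 : K * D ≤ K ^ 2 * D := by nlinarith
  have e2 : L ≤ K ^ 2 * D * L := by nlinarith [mul_nonneg hL (sub_nonneg.2 hKD)]
  have e3 : (0:ℝ) ≤ K ^ 2 * D * L := by positivity
  set A' := A / (2 * K ^ 2) with hA'def
  set D' := 20 * K ^ 2 * D * (L + 1) with hD'def
  have hA'eq : 2 * K ^ 2 * A' = A := by
    rw [hA'def]; field_simp
  have hA'pos : 0 < A' := by rw [hA'def]; positivity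
  have hA'le : A' ≤ 1 := by
    rw [hA'def, div_le_one hK20]
    nlinarith
  have hD'1 : 1 ≤ D' := by rw [hD'def]; nlinarith
  refine ⟨A', D', hA'pos, hA'le, hD'1, ?_⟩
  rintro X Z _ _ KX LX KZ LZ hQX hQZ f Y ⟨hfqi, hfd⟩ ⟨g, hgY, hglip, hgnear, hgcontr⟩
  choose sec hsec using hfd
  -- key: distance between sections controlled by distance in Z
  have hsecd : ∀ z w : Z, dist (sec z) (sec w) ≤ K * dist z w + 3 * K * L := by
    intro z w
    have h1 := (hfqi (sec z) (sec w)).1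
    have h2 : dist (f (sec z)) (f (sec w)) ≤ L + dist z w + L := by
      have t1 := dist_triangle (f (sec z)) z (f (sec w))
      have t2 := dist_triangle z w (f (sec w))
      have := hsec z
      have := hsec w
      rw [dist_comm (f (sec z)) z] at t1
      linarith
    have h3 : (1 / K) * dist (sec z) (sec w) ≤ dist z w + 3 * L := by linarith
    have h4 := mul_le_mul_of_nonneg_left h3 hK0.le
    rw [← mul_assoc, mul_one_div_cancel hK0.ne', one_mul] at h4
    nlinarith
  refine ⟨fun z => f (g (sec z)), ?_, ?_, ?_, ?_⟩
  · intro z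
    exact ⟨g (sec z), hgY _, rfl⟩
  · -- coarse Lipschitz
    intro z w
    show dist (f (g (sec z))) (f (g (sec w))) ≤ D' * dist z w + D'
    have h1 := (hfqi (g (sec z)) (g (sec w))).2
    have h2 := mul_le_mul_of_nonneg_left (hglip (sec z) (sec w)) hK0.le
    have h3 := mul_le_mul_of_nonneg_left (hsecd z w)
      (by positivity : (0:ℝ) ≤ K * D)
    have hd0 : (0:ℝ) ≤ dist z w := dist_nonneg
    have hc1 : K ^ 2 * D * dist z w ≤ D' * dist z w := by
      apply mul_le_mul_of_nonneg_right _ hd0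
      rw [hD'def]; nlinarith
    rw [hD'def] at hc1 ⊢
    nlinarith
  · -- near points of f '' Y
    rintro _ ⟨y₀, hy₀, rfl⟩
    show dist (f y₀) (f (g (sec (f y₀)))) ≤ D'
    have h1 := hsec (f y₀)
    have h2 := (hfqi y₀ (sec (f y₀))).1
    have hxy : dist y₀ (sec (f y₀)) ≤ 2 * K * L := by
      have h3 : (1 / K) * dist y₀ (sec (f y₀)) ≤ 2 * L := by linarith
      have h4 := mul_le_mul_of_nonneg_left h3 hK0.le
      rw [← mul_assoc, mul_one_div_cancel hK0.ne', one_mul] at h4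
      nlinarith
    have h5 := hglip y₀ (sec (f y₀))
    have h6 := hgnear y₀ hy₀
    have h7 : dist y₀ (g (sec (f y₀))) ≤ 2 * D + 2 * K * L * D := by
      have := dist_triangle y₀ (g y₀) (g (sec (f y₀)))
      nlinarith
    have h8 := (hfqi y₀ (g (sec (f y₀)))).2
    have h9 := mul_le_mul_of_nonneg_left h7 hK0.le
    rw [hD'def]
    nlinarith
  · -- contracting estimate
    intro z z₁ z₂ hz1 hz2
    show dist (f (g (sec z₁))) (f (g (sec z₂))) ≤ D'
    set r := infDist z (f '' Y) with hr
    have hr0 : 0 ≤ r := infDist_nonneg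
    have hYne : Y.Nonempty := ⟨g (sec z), hgY _⟩
    have hinf : r - 2 * L ≤ K * infDist (sec z) Y := by
      have hstep : (r - 2 * L) / K ≤ infDist (sec z) Y := by
        apply le_infDist_aux hYne
        intro y hy
        have h1 : r ≤ dist z (f y) := infDist_le_dist_of_mem ⟨y, hy, rfl⟩
        have h2 := (hfqi (sec z) y).2
        have h3 : dist z (f y) ≤ L + dist (f (sec z)) (f y) := by
          have := dist_triangle z (f (sec z)) (f y)
          have := hsec z
          linarith
        rw [div_le_iff₀ hK0]
        nlinarith [dist_nonneg (x := sec z) (y := y)]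
      have h4 := mul_le_mul_of_nonneg_left hstep hK0.le
      rw [mul_div_cancel₀ _ hK0.ne'] at h4
      linarith
    have hAr : 2 * K ^ 2 * (A' * r) = A * r := by rw [← mul_assoc, hA'eq]
    by_cases hcase : A * r ≤ 8 * K ^ 2 * L + 4 * A * L
    · -- small infDist case : direct Lipschitz bound
      have hA'r : A' * r ≤ 6 * L := by
        have h2 : A * r ≤ 12 * K ^ 2 * L := by
          nlinarith [mul_le_mul_of_nonneg_right hA1 hL,
            mul_nonneg hL (sub_nonneg.2 hK2)]
        have h3 : 2 * K ^ 2 * (A' * r) ≤ 2 * K ^ 2 * (6 * L) := by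
          rw [hAr]; nlinarith
        exact le_of_mul_le_mul_left h3 hK20
      have hz12 : dist z₁ z₂ ≤ 12 * L := by
        have := dist_triangle z₁ z z₂
        rw [dist_comm z₁ z] at this
        linarith
      have h1 := (hfqi (g (sec z₁)) (g (sec z₂))).2
      have h2 := mul_le_mul_of_nonneg_left (hglip (sec z₁) (sec z₂)) hK0.le
      have h3 := mul_le_mul_of_nonneg_left (hsecd z₁ z₂)
        (by positivity : (0:ℝ) ≤ K * D)
      have h4 := mul_le_mul_of_nonneg_left hz12
        (by positivity : (0:ℝ) ≤ K ^ 2 * D)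
      rw [hD'def]
      nlinarith
    · -- large infDist case : use contracting property of g
      push_neg at hcase
      have hmain : ∀ w : Z, dist z w ≤ A' * r →
          dist (sec z) (sec w) ≤ A * infDist (sec z) Y := by
        intro w hw
        have h3 := hsecd z w
        have h4 : 2 * K * (K * dist z w + 3 * K * L) ≤ 2 * K * (A * infDist (sec z) Y) := by
          have h6 : A * (r - 2 * L) ≤ A * (K * infDist (sec z) Y) :=
            mul_le_mul_of_nonneg_left hinf hA.le
          nlinarith [dist_nonneg (x := z) (y := w)]
        have h7 := le_of_mul_le_mul_left h4 (by positivity : (0:ℝ) < 2 * K)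
        linarith
      have hc := hgcontr (sec z) (sec z₁) (sec z₂) (hmain z₁ hz1) (hmain z₂ hz2)
      have h8 := (hfqi (g (sec z₁)) (g (sec z₂))).2
      rw [hD'def]
      nlinarith [dist_nonneg (x := g (sec z₁)) (y := g (sec z₂))]
end

section
/- Let X be a geodesic metric space and Y ⊆ X an (A,D)-contracting subset via a contracting map g : X → Y. Then for every integer n ≥ 4D+2, every ρ ∈ (0,1], and every r > 8D: if x₁, x₂ ∈ ∂N_r(Y) satisfy d(x₁,x₂) ≥ nr, then every rectifiable path γ connecting x₁ and x₂ that stays in the complement of the (ρr)-neighborhood of Y has length at least (Aρ/(4D))·r². -/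
open Metric

/-- A geodesic segment parametrized by arclength on `[a,b]`. -/
def IsGeodesicSeg {X : Type*} [MetricSpace X] (γ : ℝ → X) (a b : ℝ) : Prop :=
  a ≤ b ∧ ∀ s ∈ Set.Icc a b, ∀ t ∈ Set.Icc a b, dist (γ s) (γ t) = |s - t|

/-- `X` is a geodesic metric space. -/
def GeodesicSpace' (X : Type*) [MetricSpace X] : Prop :=
  ∀ x y : X, ∃ γ : ℝ → X, IsGeodesicSeg γ 0 (dist x y) ∧ γ 0 = x ∧ γ (dist x y) = y

/-!
Cut the path greedily into steps of length `δ = Aρr`. Each cut point lies at distance at least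
`ρr` from `Y`, so consecutive cut points lie in a ball `B_{A·d(x,Y)}(x)` and their projections
are `D`-close. If the path were shorter than `(Aρ/(4D))·r²`, it would be cut into at most about
`r/(4D)` pieces, and the projections of `x₁` and `x₂` would be at most about `r/4` apart.
But `g` moves the points of `∂N_r(Y)` by at most `(D+1)r + 2D`, and `d(x₁,x₂) ≥ (4D+2)r`,
so the projections are at least `2Dr - 4D` apart.
-/

section GreedyChain

variable {X : Type*} [MetricSpace X] {γ : ℝ → X} {a b δ : ℝ}

lemma exists_greedy_step {c : ℝ} (hcb : c ≤ b) (hcont : ContinuousOn γ (Set.Icc c b))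
    (hδ : 0 ≤ δ) :
    ∃ s ∈ Set.Icc c b, dist (γ c) (γ s) ≤ δ ∧ (s < b → dist (γ c) (γ s) = δ) := by
  by_cases hfar : dist (γ c) (γ b) ≤ δ
  · exact ⟨b, ⟨hcb, le_rfl⟩, hfar, fun h => absurd h (lt_irrefl b)⟩
  · have hdist : ContinuousOn (fun s => dist (γ c) (γ s)) (Set.Icc c b) :=
      (continuous_const.dist continuous_id).comp_continuousOn hcont
    obtain ⟨s, hs, hδs⟩ := intermediate_value_Icc hcb hdist
      ⟨by simpa using hδ, (not_le.mp hfar).le⟩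
    exact ⟨s, hs, hδs.le, fun _ => hδs⟩

lemma exists_greedy_chain (hab : a ≤ b) (hcont : ContinuousOn γ (Set.Icc a b)) (hδ : 0 ≤ δ) :
    ∃ t : ℕ → ℝ, t 0 = a ∧ Monotone t ∧ (∀ i, t i ∈ Set.Icc a b) ∧
      ∀ i, dist (γ (t i)) (γ (t (i + 1))) ≤ δ ∧
        (t (i + 1) < b → dist (γ (t i)) (γ (t (i + 1))) = δ) := by
  have hstep : ∀ c, ∃ s, c ∈ Set.Icc a b → s ∈ Set.Icc c b ∧ dist (γ c) (γ s) ≤ δ ∧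
      (s < b → dist (γ c) (γ s) = δ) := by
    intro c
    by_cases hc : c ∈ Set.Icc a b
    · obtain ⟨s, hs, hle, heq⟩ :=
        exists_greedy_step hc.2 (hcont.mono (Set.Icc_subset_Icc_left hc.1)) hδ
      exact ⟨s, fun _ => ⟨hs, hle, heq⟩⟩
    · exact ⟨c, fun h => absurd h hc⟩
  choose next hnext using hstep
  have hsucc : ∀ i, next^[i + 1] a = next (next^[i] a) := fun i =>
    Function.iterate_succ_apply' next i a
  have hmem : ∀ i, next^[i] a ∈ Set.Icc a b := by
    intro i
    induction i with
    | zero => exact ⟨le_rfl, hab⟩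
    | succ i ih =>
      rw [hsucc]
      exact ⟨ih.1.trans (hnext _ ih).1.1, (hnext _ ih).1.2⟩
  refine ⟨fun i => next^[i] a, rfl, monotone_nat_of_le_succ fun i => ?_, hmem, fun i => ?_⟩
  · simp only [hsucc]
    exact (hnext _ (hmem i)).1.1
  · simp only [hsucc]
    exact (hnext _ (hmem i)).2

lemma exists_chain_of_eVariationOn_lt (hab : a ≤ b) (hcont : ContinuousOn γ (Set.Icc a b))
    (hδ : 0 ≤ δ) {m : ℕ} (hvar : eVariationOn γ (Set.Icc a b) < ENNReal.ofReal (m * δ)) :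
    ∃ t : ℕ → ℝ, t 0 = a ∧ t m = b ∧ (∀ i, t i ∈ Set.Icc a b) ∧
      ∀ i, dist (γ (t i)) (γ (t (i + 1))) ≤ δ := by
  obtain ⟨t, ht0, hmono, hmem, hstep⟩ := exists_greedy_chain hab hcont hδ
  refine ⟨t, ht0, ?_, hmem, fun i => (hstep i).1⟩
  by_contra hne
  have htm : t m < b := lt_of_le_of_ne (hmem m).2 hne
  have hfull : ∀ i ∈ Finset.range m, edist (γ (t (i + 1))) (γ (t i)) = ENNReal.ofReal δ := by
    intro i hi
    have hlt : t (i + 1) < b := (hmono (Finset.mem_range.mp hi)).trans_lt htm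
    rw [edist_dist, dist_comm, (hstep i).2 hlt]
  have hsum := eVariationOn.sum_le (f := γ) (n := m) hmono hmem
  rw [Finset.sum_congr rfl hfull, Finset.sum_const, Finset.card_range, nsmul_eq_mul,
    ← ENNReal.ofReal_natCast, ← ENNReal.ofReal_mul (Nat.cast_nonneg m)] at hsum
  exact hsum.not_gt hvar

end GreedyChain

namespace ContractingMap

variable {X : Type*} [MetricSpace X] {A D : ℝ} {Y : Set X} {g : X → X}

lemma dist_map_le (hg : ContractingMap A D Y g) (hD : 0 ≤ D) (x : X) :
    dist x (g x) ≤ (D + 1) * infDist x Y + 2 * D := by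
  obtain ⟨hgY, hgL, hgD, -⟩ := hg
  have hlow : (dist x (g x) - 2 * D) / (D + 1) ≤ infDist x Y := by
    refine (le_infDist ⟨g x, hgY x⟩).mpr fun y hy => ?_
    rw [div_le_iff₀ (by linarith)]
    have hxy := hgL y x
    rw [dist_comm y x] at hxy
    linarith [dist_triangle4 x y (g y) (g x), hgD y hy]
  rwa [div_le_iff₀ (by linarith), sub_le_iff_le_add, mul_comm] at hlow

lemma dist_map_chain_le (hg : ContractingMap A D Y g) (hA : 0 ≤ A) (p : ℕ → X) (m : ℕ)
    (hp : ∀ i, dist (p i) (p (i + 1)) ≤ A * infDist (p i) Y) :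
    dist (g (p 0)) (g (p m)) ≤ m * D := by
  have hcenter : ∀ i, dist (p i) (p i) ≤ A * infDist (p i) Y := fun i => by
    rw [dist_self]
    exact mul_nonneg hA infDist_nonneg
  calc dist (g (p 0)) (g (p m))
      ≤ ∑ i ∈ Finset.range m, dist (g (p i)) (g (p (i + 1))) :=
        dist_le_range_sum_dist (fun i => g (p i)) m
    _ ≤ ∑ _i ∈ Finset.range m, D :=
        Finset.sum_le_sum fun i _ => hg.2.2.2 (p i) (p i) (p (i + 1)) (hcenter i) (hp i)
    _ = m * D := by simp

end ContractingMap

theorem contracting_divergence_quadratic_general {X : Type*} [MetricSpace X]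
    (A D : ℝ) (hA : 0 < A) (hD : 1 ≤ D)
    (Y : Set X) (g : X → X) (hg : ContractingMap A D Y g)
    (n : ℕ) (hn : (4 * D + 2 : ℝ) ≤ (n : ℝ)) (ρ : ℝ) (hρ : 0 < ρ)
    (r : ℝ) (hr : 8 * D < r)
    (x₁ x₂ : X) (h₁ : infDist x₁ Y = r) (h₂ : infDist x₂ Y = r)
    (hfar : (n : ℝ) * r ≤ dist x₁ x₂)
    (γ : ℝ → X) (a b : ℝ) (hab : a ≤ b) (hcont : ContinuousOn γ (Set.Icc a b))
    (hga : γ a = x₁) (hgb : γ b = x₂)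
    (havoid : ∀ t ∈ Set.Icc a b, ρ * r ≤ infDist (γ t) Y) :
    ENNReal.ofReal (A * ρ / (4 * D) * r ^ 2) ≤ eVariationOn γ (Set.Icc a b) := by
  have hr0 : 0 < r := by linarith
  set δ := A * ρ * r
  set m := ⌈r / (4 * D)⌉₊
  have hm : (m : ℝ) < r / (4 * D) + 1 := Nat.ceil_lt_add_one (by positivity)
  have hM : A * ρ / (4 * D) * r ^ 2 ≤ m * δ := by
    calc A * ρ / (4 * D) * r ^ 2 = r / (4 * D) * δ := by ring
      _ ≤ m * δ := mul_le_mul_of_nonneg_right (Nat.le_ceil _) (by positivity)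
  by_contra hshort
  obtain ⟨t, ht0, htm, hmem, hstep⟩ := exists_chain_of_eVariationOn_lt hab hcont
    (by positivity) ((not_le.mp hshort).trans_le (ENNReal.ofReal_le_ofReal hM))
  have hproj_upper : dist (g x₁) (g x₂) ≤ m * D := by
    simpa [ht0, htm, hga, hgb] using hg.dist_map_chain_le hA.le (fun i => γ (t i)) m fun i =>
      (hstep i).trans (by nlinarith [havoid _ (hmem i)])
  have hproj_lower : n * r - 2 * ((D + 1) * r + 2 * D) ≤ dist (g x₁) (g x₂) := by
    have e₁ := hg.dist_map_le (by linarith) x₁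
    have e₂ := hg.dist_map_le (by linarith) x₂
    rw [h₁] at e₁
    rw [h₂] at e₂
    linarith [dist_triangle4 x₁ (g x₁) (g x₂) x₂, dist_comm x₂ (g x₂)]
  have hmD : (m : ℝ) * D < r / 4 + D := by
    have := mul_lt_mul_of_pos_right hm (by linarith : (0 : ℝ) < D)
    rwa [add_mul, div_mul_eq_mul_div, mul_div_mul_right _ _ (by linarith : D ≠ 0),
      one_mul] at this
  nlinarith [mul_le_mul_of_nonneg_right hn hr0.le]

/-- If `Y` is `(A,D)`-contracting in a geodesic space `X`, `n ≥ 4D+2`, `ρ ∈ (0,1]`, `r > 8D`,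
and `x₁, x₂ ∈ ∂N_r(Y)` with `d(x₁,x₂) ≥ nr`, then any rectifiable path from `x₁` to `x₂`
avoiding the `ρr`-neighborhood of `Y` has length at least `(Aρ/(4D))·r²`. -/
theorem contracting_divergence_quadratic {X : Type*} [MetricSpace X]
    (hgeo : GeodesicSpace' X)
    (A D : ℝ) (hA : 0 < A) (hA1 : A ≤ 1) (hD : 1 ≤ D)
    (Y : Set X) (g : X → X) (hg : ContractingMap A D Y g)
    (n : ℕ) (hn : (4 * D + 2 : ℝ) ≤ (n : ℝ)) (ρ : ℝ) (hρ : 0 < ρ) (hρ1 : ρ ≤ 1)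
    (r : ℝ) (hr : 8 * D < r)
    (x₁ x₂ : X) (h₁ : infDist x₁ Y = r) (h₂ : infDist x₂ Y = r)
    (hfar : (n : ℝ) * r ≤ dist x₁ x₂)
    (γ : ℝ → X) (a b : ℝ) (hab : a ≤ b) (hcont : ContinuousOn γ (Set.Icc a b))
    (hga : γ a = x₁) (hgb : γ b = x₂)
    (havoid : ∀ t ∈ Set.Icc a b, ρ * r ≤ infDist (γ t) Y) :
    ENNReal.ofReal (A * ρ / (4 * D) * r ^ 2) ≤ eVariationOn γ (Set.Icc a b) :=
  contracting_divergence_quadratic_general A D hA hD Y g hg n hn ρ hρ r hr x₁ x₂ h₁ h₂ hfar γ a b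
    hab hcont hga hgb havoid
end

section
/- Fix K ≥ 1 and L ≥ 0. There exist constants K', L' depending only on K and L such that: if X and Y are (K,L)-quasi-geodesic metric spaces and γ = γ₁ ∗ ⋯ ∗ γₙ is a spiral path of slope N > 4K² in Z = X × Y (with the ℓ¹ metric) whose first segment γ₁ has endpoints at distance at least 3K²L + 1 apart, then γ is a (K',L')-quasi-geodesic of Z. -/
open Metric

/-- The `ℓ¹`-distance on the product `X × Y`. -/
def distL1 {X Y : Type*} [MetricSpace X] [MetricSpace Y] (p q : X × Y) : ℝ :=
  dist p.1 q.1 + dist p.2 q.2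

/-- `(K,L)`-quasi-geodesic on `[a,b]` in `X × Y` with the `ℓ¹`-metric. -/
def QuasiGeodesicOnL1 {X Y : Type*} [MetricSpace X] [MetricSpace Y] (K L : ℝ)
    (γ : ℝ → X × Y) (a b : ℝ) : Prop :=
  ∀ s ∈ Set.Icc a b, ∀ t ∈ Set.Icc a b,
    (1 / K) * |s - t| - L ≤ distL1 (γ s) (γ t) ∧ distL1 (γ s) (γ t) ≤ K * |s - t| + L

/-- A spiral path of slope `N` in `Z = X × Y` (with the `ℓ¹`-metric): a concatenation of `n`
`(K,L)`-quasi-geodesic segments, each constant in one of the two factors, alternating which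
factor is constant, such that the distance between the endpoints of each segment (except
possibly the last) is at least `N` times that of the previous segment. -/
structure SpiralPath {X Y : Type*} [MetricSpace X] [MetricSpace Y] (K L N : ℝ)
    (γ : ℝ → X × Y) (n : ℕ) (t : ℕ → ℝ) : Prop where
  pos : 1 ≤ n
  mono : ∀ i < n, t i < t (i + 1)
  seg : ∀ i < n, QuasiGeodesicOnL1 K L γ (t i) (t (i + 1))
  alternating : ∃ c : ℕ → Bool, (∀ i, i + 1 < n → c (i + 1) = !(c i)) ∧
    ∀ i < n,
      if c i then ∀ s ∈ Set.Icc (t i) (t (i + 1)), (γ s).1 = (γ (t i)).1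
      else ∀ s ∈ Set.Icc (t i) (t (i + 1)), (γ s).2 = (γ (t i)).2
  slope : ∀ i : ℕ, i + 2 < n →
    N * distL1 (γ (t (i + 1))) (γ (t i)) ≤ distL1 (γ (t (i + 2))) (γ (t (i + 1)))

private lemma distL1_nonneg' {X Y : Type*} [MetricSpace X] [MetricSpace Y] (p q : X × Y) :
    0 ≤ distL1 p q := add_nonneg dist_nonneg dist_nonneg

private lemma distL1_comm' {X Y : Type*} [MetricSpace X] [MetricSpace Y] (p q : X × Y) :
    distL1 p q = distL1 q p := by simp [distL1, dist_comm]

private lemma distL1_triangle' {X Y : Type*} [MetricSpace X] [MetricSpace Y] (p q r : X × Y) :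
    distL1 p r ≤ distL1 p q + distL1 q r := by
  have h1 := dist_triangle p.1 q.1 r.1
  have h2 := dist_triangle p.2 q.2 r.2
  simp only [distL1]; linarith

private lemma distL1_self' {X Y : Type*} [MetricSpace X] [MetricSpace Y] (p : X × Y) :
    distL1 p p = 0 := by simp [distL1]

private lemma param_le {K L x Dq : ℝ} (hK : 0 < K) (h : (1/K) * x - L ≤ Dq) :
    x ≤ K * Dq + K * L := by
  have h2 : (1/K) * x ≤ Dq + L := by linarith
  have h3 : x = K * ((1/K) * x) := by field_simp
  calc x = K * ((1/K)*x) := h3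
    _ ≤ K * (Dq + L) := mul_le_mul_of_nonneg_left h2 hK.le
    _ = K * Dq + K * L := by ring

private lemma param_ge {Kp Lp x Dq : ℝ} (hK : 0 < Kp) (h : x ≤ Kp*Dq + Kp*Lp) :
    (1/Kp)*x - Lp ≤ Dq := by
  have h2 : x / Kp ≤ Dq + Lp := by
    rw [div_le_iff₀ hK]; nlinarith
  have h3 : (1/Kp)*x = x / Kp := by ring
  linarith [h3.le, h3.ge]

set_option maxHeartbeats 1600000 in
/-- Spiral paths are quasi-geodesics: for every `K ≥ 1`, `L ≥ 0` there are `K'`, `L'` such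
that any spiral path of slope `N > 4K²` in the `ℓ¹`-product of two `(K,L)`-quasi-geodesic
spaces, whose first segment has endpoints at least `3K²L + 1` apart, is a
`(K',L')`-quasi-geodesic. -/
theorem spiral_paths_are_quasiGeodesics (K L : ℝ) (hK : 1 ≤ K) (hL : 0 ≤ L) :
    ∃ K' L' : ℝ, 1 ≤ K' ∧ 0 ≤ L' ∧
      ∀ (X Y : Type) [MetricSpace X] [MetricSpace Y],
        IsQuasiGeodesicSpace X K L → IsQuasiGeodesicSpace Y K L →
        ∀ (N : ℝ) (γ : ℝ → X × Y) (n : ℕ) (t : ℕ → ℝ),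
          4 * K ^ 2 < N → SpiralPath K L N γ n t →
          3 * K ^ 2 * L + 1 ≤ distL1 (γ (t 1)) (γ (t 0)) →
          QuasiGeodesicOnL1 K' L' γ (t 0) (t n) := by
  have hK0 : (0:ℝ) < K := lt_of_lt_of_le one_pos hK
  refine ⟨9*K, 2*L, by linarith, by linarith, ?_⟩
  intro X Y _ _ _ _ N γ n t hN sp hfirst
  obtain ⟨d, hd⟩ : ∃ d : ℕ → ℝ, ∀ k, d k = distL1 (γ (t (k+1))) (γ (t k)) :=
    ⟨fun k => distL1 (γ (t (k+1))) (γ (t k)), fun _ => rfl⟩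
  have hdnn : ∀ k, 0 ≤ d k := fun k => (hd k) ▸ distL1_nonneg' _ _
  have hslope : ∀ k : ℕ, k + 2 < n → N * d k ≤ d (k+1) := by
    intro k hk; rw [hd, hd]; exact sp.slope k hk
  have hd0 : 3*K^2*L + 1 ≤ d 0 := by rw [hd]; exact hfirst
  have hK2 : (1:ℝ) ≤ K^2 := by nlinarith
  -- geometric growth
  have hratio : ∀ k, k + 2 < n → 4*K^2 * d k ≤ d (k+1) := by
    intro k hk
    have h := hslope k hk
    nlinarith [hdnn k]
  -- monotonicity of t
  have htmono : ∀ j : ℕ, j ≤ n → ∀ i : ℕ, i ≤ j → t i ≤ t j := by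
    intro j
    induction j with
    | zero =>
      intro _ i hi
      have : i = 0 := by omega
      subst this; exact le_rfl
    | succ m ih =>
      intro hmn i hi
      rcases Nat.lt_or_ge i (m+1) with h | h
      · have h1 : t i ≤ t m := ih (by omega) i (by omega)
        have h2 : t m < t (m+1) := sp.mono m (by omega)
        linarith
      · have : i = m + 1 := by omega
        subst this; exact le_rfl
  -- segment parameter-length bounds
  have hdelta_ub : ∀ k, k < n → t (k+1) - t k ≤ K * d k + K * L := by
    intro k hk
    have hm := sp.mono k hk
    have h := (sp.seg k hk (t (k+1)) ⟨hm.le, le_rfl⟩ (t k) ⟨le_rfl, hm.le⟩).1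
    have habs : |t (k+1) - t k| = t (k+1) - t k := abs_of_nonneg (by linarith)
    rw [habs, ← hd] at h
    exact param_le hK0 h
  have hdelta_lb : ∀ k, k < n → d k ≤ K * (t (k+1) - t k) + L := by
    intro k hk
    have hm := sp.mono k hk
    have h := (sp.seg k hk (t (k+1)) ⟨hm.le, le_rfl⟩ (t k) ⟨le_rfl, hm.le⟩).2
    have habs : |t (k+1) - t k| = t (k+1) - t k := abs_of_nonneg (by linarith)
    rw [hd]
    rwa [habs] at h
  -- all non-final segments are long
  have hD : ∀ k, k+1 < n → 3*K^2*L + 1 ≤ d k := by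
    intro k
    induction k with
    | zero => intro _; exact hd0
    | succ m ih =>
      intro hm
      have h1 := hratio m (by omega)
      have h2 := ih (by omega)
      nlinarith [hdnn m, mul_nonneg (by linarith [hK2] : (0:ℝ) ≤ 4*K^2 - 1) (hdnn m)]
  have hmono_d : ∀ a b : ℕ, a ≤ b → b + 1 < n → d a ≤ d b := by
    intro a b
    induction b with
    | zero =>
      intro hab _
      have : a = 0 := by omega
      subst this; exact le_rfl
    | succ m ih =>
      intro hab hbn
      rcases Nat.lt_or_ge a (m+1) with h | h
      · have h1 := ih (by omega) (by omega)
        have h2 := hratio m (by omega)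
        nlinarith [hdnn m, mul_nonneg (by linarith [hK2] : (0:ℝ) ≤ 4*K^2 - 1) (hdnn m)]
      · have : a = m+1 := by omega
        subst this; exact le_rfl
  -- locating a point in a segment
  have hmem : ∀ u : ℝ, t 0 ≤ u → u ≤ t n → ∃ i, i < n ∧ t i ≤ u ∧ u ≤ t (i+1) := by
    intro u hu0 hun
    have main : ∀ m, m ≤ n → 1 ≤ m → u ≤ t m → ∃ i, i < m ∧ t i ≤ u ∧ u ≤ t (i+1) := by
      intro m
      induction m with
      | zero => intro _ h; omega
      | succ m ih =>
        intro hmn _ hum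
        by_cases hm : m = 0
        · subst hm; exact ⟨0, by omega, hu0, hum⟩
        · by_cases hut : u ≤ t m
          · obtain ⟨i, h1, h2, h3⟩ := ih (by omega) (by omega) hut
            exact ⟨i, by omega, h2, h3⟩
          · exact ⟨m, by omega, le_of_not_ge hut, hum⟩
    exact main n le_rfl sp.pos hun
  -- the key two-sided estimate for ordered pairs of points
  have key : ∀ u v : ℝ, t 0 ≤ u → v ≤ t n → u ≤ v →
      v - u ≤ 9*K * distL1 (γ u) (γ v) + 2*K*L ∧
      distL1 (γ u) (γ v) ≤ 9*K * (v - u) + 2*L := by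
    intro u v hu0 hvn huv
    obtain ⟨i, hi, hui, hui'⟩ := hmem u hu0 (le_trans huv hvn)
    obtain ⟨j, hj, hvj, hvj'⟩ := hmem v (le_trans hu0 huv) hvn
    rcases Nat.lt_or_ge j i with hji | hij
    · -- degenerate: then u = v
      have h1 : t (j+1) ≤ t i := htmono i (by omega) (j+1) (by omega)
      have huv' : u = v := le_antisymm huv (by linarith)
      rw [← huv', distL1_self']
      constructor
      · nlinarith [mul_nonneg hK0.le hL]
      · nlinarith
    rcases eq_or_lt_of_le hij with heq | hlt
    · -- same segment
      subst heq
      have h := sp.seg i hi u ⟨hui, hui'⟩ v ⟨hvj, hvj'⟩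
      have habs : |u - v| = v - u := by
        rw [abs_sub_comm]; exact abs_of_nonneg (by linarith)
      rw [habs] at h
      obtain ⟨h1, h2⟩ := h
      have h3 := param_le hK0 h1
      have hdn := distL1_nonneg' (γ u) (γ v)
      constructor
      · nlinarith [mul_nonneg hK0.le hdn, mul_nonneg hK0.le hL]
      · nlinarith [mul_nonneg hK0.le (sub_nonneg.mpr huv)]
    -- i < j : write j = m + 1
    obtain ⟨m, rfl⟩ : ∃ m, j = m + 1 := ⟨j - 1, by omega⟩
    have him : i ≤ m := by omega
    have hjn : m + 1 < n := hj
    -- inductive absorption estimates, for the fixed start point u ∈ [t i, t (i+1)]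
    have hE : ∀ m', i ≤ m' → m' + 1 < n →
        distL1 (γ u) (γ (t (m'+1))) ≤ 8*K^2/3 * d m' := by
      intro m' hm'
      induction m', hm' using Nat.le_induction with
      | base =>
        intro hin
        have hmi := sp.mono i hi
        have h := (sp.seg i hi u ⟨hui, hui'⟩ (t (i+1)) ⟨hmi.le, le_rfl⟩).2
        have habs : |u - t (i+1)| = t (i+1) - u := by
          rw [abs_sub_comm]; exact abs_of_nonneg (by linarith)
        rw [habs] at h
        have hdel := hdelta_ub i hi
        have h5 : t (i+1) - u ≤ K * d i + K * L := by linarith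
        have h6 : distL1 (γ u) (γ (t (i+1))) ≤ K*(K*d i + K*L) + L := by
          have := mul_le_mul_of_nonneg_left h5 hK0.le
          linarith
        have hDi := hD i hin
        nlinarith [hdnn i, mul_nonneg (by linarith [hK2] : (0:ℝ) ≤ K^2 - 1) hL,
          mul_nonneg (by linarith [hK2] : (0:ℝ) ≤ K^2 - 1) (hdnn i)]
      | succ m' hm' ih =>
        intro h2n
        have ih' := ih (by omega)
        have htri := distL1_triangle' (γ u) (γ (t (m'+1))) (γ (t (m'+2)))
        have hh : distL1 (γ (t (m'+1))) (γ (t (m'+2))) = d (m'+1) :=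
          (distL1_comm' _ _).trans (hd _).symm
        have hr := hratio m' (by omega)
        nlinarith [hdnn m', hdnn (m'+1),
          mul_nonneg (by linarith [hK2] : (0:ℝ) ≤ 8*K^2 - 5) (hdnn (m'+1))]
    have hT : ∀ m', i ≤ m' → m' + 1 < n → t (m'+1) - t (i+1) ≤ 2*K * d m' := by
      intro m' hm'
      induction m', hm' using Nat.le_induction with
      | base =>
        intro _
        nlinarith [mul_nonneg hK0.le (hdnn i)]
      | succ m' hm' ih =>
        intro h2n
        have ih' := ih (by omega)
        have hdel := hdelta_ub (m'+1) (by omega)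
        have hr := hratio m' (by omega)
        have hDm := hD (m'+1) (by omega)
        have a1 : 3*(K*L) ≤ d (m'+1) := by
          nlinarith [mul_nonneg (by nlinarith [hK, hK0] : (0:ℝ) ≤ K^2 - K) hL]
        have a2 : 4*(K*d m') ≤ d (m'+1) := by
          nlinarith [mul_nonneg (by nlinarith [hK, hK0] : (0:ℝ) ≤ K^2 - K) (hdnn m')]
        nlinarith [mul_nonneg (sub_nonneg.mpr hK) (hdnn (m'+1))]
    have hU : ∀ m', i ≤ m' → m' + 1 < n →
        distL1 (γ u) (γ (t (m'+1))) ≤ K*(t (m'+1) - u) + (1/2)*(t (m'+1) - t (i+1)) + L := by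
      intro m' hm'
      induction m', hm' using Nat.le_induction with
      | base =>
        intro _
        have hmi := sp.mono i hi
        have h := (sp.seg i hi u ⟨hui, hui'⟩ (t (i+1)) ⟨hmi.le, le_rfl⟩).2
        have habs : |u - t (i+1)| = t (i+1) - u := by
          rw [abs_sub_comm]; exact abs_of_nonneg (by linarith)
        rw [habs] at h
        linarith
      | succ m' hm' ih =>
        intro h2n
        have ih' := ih (by omega)
        have htri := distL1_triangle' (γ u) (γ (t (m'+1))) (γ (t (m'+2)))
        have hh : distL1 (γ (t (m'+1))) (γ (t (m'+2))) = d (m'+1) :=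
          (distL1_comm' _ _).trans (hd _).symm
        have hdlb := hdelta_lb (m'+1) (by omega)
        have hDm := hD (m'+1) (by omega)
        have hLd : 2*L ≤ t (m'+2) - t (m'+1) := by
          nlinarith [mul_nonneg (by nlinarith [hK, hK0] : (0:ℝ) ≤ K^2 - K) hL,
            mul_nonneg (sub_nonneg.mpr hK) hL]
        linarith
    -- endpoint-piece bounds on segment j = m+1
    have hmj := sp.mono (m+1) hjn
    have hPseg := sp.seg (m+1) hjn (t (m+1)) ⟨le_rfl, hmj.le⟩ v ⟨hvj, hvj'⟩
    have habsP : |t (m+1) - v| = v - t (m+1) := by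
      rw [abs_sub_comm]; exact abs_of_nonneg (by linarith)
    rw [habsP] at hPseg
    have hPlb : v - t (m+1) ≤ K * distL1 (γ (t (m+1))) (γ v) + K*L := param_le hK0 hPseg.1
    have hPnn := distL1_nonneg' (γ (t (m+1))) (γ v)
    -- the uniform upper bound
    have hub : distL1 (γ u) (γ v) ≤ 9*K * (v - u) + 2*L := by
      have hUu := hU m him (by omega)
      have htri := distL1_triangle' (γ u) (γ (t (m+1))) (γ v)
      have h1 : t (i+1) ≤ t (m+1) := htmono (m+1) (by omega) (i+1) (by omega)
      have hvu : 0 ≤ v - u := by linarith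
      nlinarith [mul_nonneg (by linarith : (0:ℝ) ≤ 8*K - 1/2) hvu, hPseg.2]
    refine ⟨?_, hub⟩
    -- lower bound: use the alternating structure
    obtain ⟨c, hcalt, hcseg⟩ := sp.alternating
    have hcflip : c (m+1) = !(c m) := hcalt m hjn
    rcases eq_or_lt_of_le him with heq | him'
    · -- adjacent segments : i = m
      subst heq
      have hsegI := hcseg i hi
      have hsegJ := hcseg (i+1) hjn
      have hmi := sp.mono i hi
      have hsum : distL1 (γ u) (γ v) =
          distL1 (γ u) (γ (t (i+1))) + distL1 (γ (t (i+1))) (γ v) := by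
        cases hb : c i with
        | false =>
          have hI2 : ∀ s ∈ Set.Icc (t i) (t (i+1)), (γ s).2 = (γ (t i)).2 := by
            simpa [hb] using hsegI
          have hJ1 : ∀ s ∈ Set.Icc (t (i+1)) (t (i+2)), (γ s).1 = (γ (t (i+1))).1 := by
            rw [hb] at hcflip
            simpa [hcflip] using hsegJ
          have e1 : (γ v).1 = (γ (t (i+1))).1 := hJ1 v ⟨hvj, hvj'⟩
          have e2 : (γ u).2 = (γ (t i)).2 := hI2 u ⟨hui, hui'⟩
          have e3 : (γ (t (i+1))).2 = (γ (t i)).2 := hI2 (t (i+1)) ⟨hmi.le, le_rfl⟩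
          have e4 : (γ u).2 = (γ (t (i+1))).2 := e2.trans e3.symm
          simp only [distL1, e1, e4, dist_self]
          ring
        | true =>
          have hI1 : ∀ s ∈ Set.Icc (t i) (t (i+1)), (γ s).1 = (γ (t i)).1 := by
            simpa [hb] using hsegI
          have hJ2 : ∀ s ∈ Set.Icc (t (i+1)) (t (i+2)), (γ s).2 = (γ (t (i+1))).2 := by
            rw [hb] at hcflip
            simpa [hcflip] using hsegJ
          have e1 : (γ v).2 = (γ (t (i+1))).2 := hJ2 v ⟨hvj, hvj'⟩
          have e2 : (γ u).1 = (γ (t i)).1 := hI1 u ⟨hui, hui'⟩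
          have e3 : (γ (t (i+1))).1 = (γ (t i)).1 := hI1 (t (i+1)) ⟨hmi.le, le_rfl⟩
          have e4 : (γ u).1 = (γ (t (i+1))).1 := e2.trans e3.symm
          simp only [distL1, e1, e4, dist_self]
          ring
      have hQseg := sp.seg i hi u ⟨hui, hui'⟩ (t (i+1)) ⟨hmi.le, le_rfl⟩
      have habsQ : |u - t (i+1)| = t (i+1) - u := by
        rw [abs_sub_comm]; exact abs_of_nonneg (by linarith)
      rw [habsQ] at hQseg
      have hQlb : t (i+1) - u ≤ K * distL1 (γ u) (γ (t (i+1))) + K*L := param_le hK0 hQseg.1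
      have hQnn := distL1_nonneg' (γ u) (γ (t (i+1)))
      nlinarith [mul_nonneg hK0.le hQnn, mul_nonneg hK0.le hPnn]
    · -- at least one full segment in between : i < m, write m = p + 1
      obtain ⟨p, rfl⟩ : ∃ p, m = p + 1 := ⟨m - 1, by omega⟩
      have hip : i ≤ p := by omega
      -- absorption bounds
      have hW : distL1 (γ u) (γ (t (p+1))) ≤ 8*K^2/3 * d p := hE p hip (by omega)
      have hQ : distL1 (γ u) (γ (t (i+1))) ≤ 8*K^2/3 * d i := hE i le_rfl (by omega)
      have hrp : 4*K^2 * d p ≤ d (p+1) := hratio p (by omega)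
      have hdi : d i ≤ d p := hmono_d i p hip (by omega)
      have hWle : distL1 (γ u) (γ (t (p+1))) ≤ (2/3) * d (p+1) := by linarith
      have hQle : distL1 (γ u) (γ (t (i+1))) ≤ (2/3) * d (p+1) := by
        nlinarith [mul_le_mul_of_nonneg_left hdi (by positivity : (0:ℝ) ≤ 8*K^2/3)]
      have hTm : t (p+2) - t (i+1) ≤ 2*K * d (p+1) := hT (p+1) (by omega) (by omega)
      -- the coordinate estimate : P + d (p+1) - W ≤ dist
      have hmp := sp.mono (p+1) (by omega : p + 1 < n)
      have hsum : distL1 (γ (t (p+2))) (γ v) + distL1 (γ (t (p+2))) (γ (t (p+1)))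
          - distL1 (γ u) (γ (t (p+1))) ≤ distL1 (γ u) (γ v) := by
        have hcflip' : c (p+2) = !(c (p+1)) := hcalt (p+1) hjn
        have hsegI := hcseg (p+1) (by omega : p + 1 < n)
        have hsegJ := hcseg (p+2) hjn
        cases hb : c (p+1) with
        | false =>
          have hI2 : ∀ s ∈ Set.Icc (t (p+1)) (t (p+2)), (γ s).2 = (γ (t (p+1))).2 := by
            simpa [hb] using hsegI
          have hJ1 : ∀ s ∈ Set.Icc (t (p+2)) (t (p+3)), (γ s).1 = (γ (t (p+2))).1 := by
            rw [hb] at hcflip'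
            simpa [hcflip'] using hsegJ
          have e1 : (γ v).1 = (γ (t (p+2))).1 := hJ1 v ⟨hvj, hvj'⟩
          have e2 : (γ (t (p+2))).2 = (γ (t (p+1))).2 := hI2 (t (p+2)) ⟨hmp.le, le_rfl⟩
          have k1 : dist (γ (t (p+2))).1 (γ (t (p+1))).1 ≤
              dist (γ (t (p+2))).1 (γ u).1 + dist (γ u).1 (γ (t (p+1))).1 :=
            dist_triangle _ _ _
          have k2 : dist (γ (t (p+2))).2 (γ v).2 ≤
              dist (γ (t (p+2))).2 (γ u).2 + dist (γ u).2 (γ v).2 :=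
            dist_triangle _ _ _
          simp only [distL1, e1, e2, dist_self]
          rw [e2] at k2
          linarith [k1, k2, dist_comm ((γ (t (p+1))).2) ((γ u).2), dist_comm ((γ (t (p+2))).1) ((γ u).1)]
        | true =>
          have hI1 : ∀ s ∈ Set.Icc (t (p+1)) (t (p+2)), (γ s).1 = (γ (t (p+1))).1 := by
            simpa [hb] using hsegI
          have hJ2 : ∀ s ∈ Set.Icc (t (p+2)) (t (p+3)), (γ s).2 = (γ (t (p+2))).2 := by
            rw [hb] at hcflip'
            simpa [hcflip'] using hsegJ
          have e1 : (γ v).2 = (γ (t (p+2))).2 := hJ2 v ⟨hvj, hvj'⟩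
          have e2 : (γ (t (p+2))).1 = (γ (t (p+1))).1 := hI1 (t (p+2)) ⟨hmp.le, le_rfl⟩
          have k1 : dist (γ (t (p+2))).2 (γ (t (p+1))).2 ≤
              dist (γ (t (p+2))).2 (γ u).2 + dist (γ u).2 (γ (t (p+1))).2 :=
            dist_triangle _ _ _
          have k2 : dist (γ (t (p+2))).1 (γ v).1 ≤
              dist (γ (t (p+2))).1 (γ u).1 + dist (γ u).1 (γ v).1 :=
            dist_triangle _ _ _
          simp only [distL1, e1, e2, dist_self]
          rw [e2] at k2
          linarith [k1, k2, dist_comm ((γ (t (p+1))).1) ((γ u).1), dist_comm ((γ (t (p+2))).2) ((γ u).2)]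
      -- assemble the lower bound
      have hQseg := sp.seg i hi u ⟨hui, hui'⟩ (t (i+1)) ⟨(sp.mono i hi).le, le_rfl⟩
      have habsQ : |u - t (i+1)| = t (i+1) - u := by
        rw [abs_sub_comm]; exact abs_of_nonneg (by linarith)
      rw [habsQ] at hQseg
      have hQlb : t (i+1) - u ≤ K * distL1 (γ u) (γ (t (i+1))) + K*L := param_le hK0 hQseg.1
      have hDd3 : d (p+1) ≤ 3 * (distL1 (γ u) (γ v) - distL1 (γ (t (p+2))) (γ v)) := by
        have hdp : d (p+1) = distL1 (γ (t (p+2))) (γ (t (p+1))) := hd _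
        linarith [hdp.le, hdp.ge]
      have c2 := mul_le_mul_of_nonneg_left hDd3 hK0.le
      have c1 := mul_le_mul_of_nonneg_left hQle hK0.le
      have c3 := mul_nonneg hK0.le hPnn
      have c4 := mul_nonneg hK0.le (distL1_nonneg' (γ u) (γ v))
      linarith
  -- conclude
  intro s hs r hr
  rcases le_total s r with h | h
  · have hk := key s r hs.1 hr.2 h
    have habs : |s - r| = r - s := by
      rw [abs_sub_comm]; exact abs_of_nonneg (by linarith)
    rw [habs]
    constructor
    · have h9 : (0:ℝ) < 9*K := by linarith
      have h2 : r - s ≤ (9*K)*(distL1 (γ s) (γ r)) + (9*K)*(2*L) := by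
        nlinarith [hk.1, mul_nonneg hK0.le hL]
      exact param_ge h9 h2
    · exact hk.2
  · have hk := key r s hr.1 hs.2 h
    have habs : |s - r| = s - r := abs_of_nonneg (by linarith)
    have hcomm : distL1 (γ s) (γ r) = distL1 (γ r) (γ s) := distL1_comm' _ _
    rw [habs, hcomm]
    constructor
    · have h9 : (0:ℝ) < 9*K := by linarith
      have h2 : s - r ≤ (9*K)*(distL1 (γ r) (γ s)) + (9*K)*(2*L) := by
        nlinarith [hk.1, mul_nonneg hK0.le hL]
      exact param_ge h9 h2
    · exact hk.2
end

section
/- Let X be a δ-hyperbolic geodesic metric space and Y ⊆ X a K-quasiconvex subset. Then there exists r > 0 depending only on δ and K such that for all x, y ∈ X: if d(p_Y(x), p_Y(y)) > r, then every geodesic connecting x and y intersects the r-neighborhood of Y, where p_Y denotes a closest point projection onto Y (a map with d(x, p_Y(x)) ≤ d(x,Y) + 1). -/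
open Metric

/-- `X` is `δ`-hyperbolic: geodesic triangles are `δ`-thin. -/
def DeltaHyperbolic (X : Type*) [MetricSpace X] (δ : ℝ) : Prop :=
  ∀ (γ₁ γ₂ γ₃ : ℝ → X) (a₁ b₁ a₂ b₂ a₃ b₃ : ℝ),
    IsGeodesicSeg γ₁ a₁ b₁ → IsGeodesicSeg γ₂ a₂ b₂ → IsGeodesicSeg γ₃ a₃ b₃ →
    γ₁ a₁ = γ₃ a₃ → γ₁ b₁ = γ₂ a₂ → γ₂ b₂ = γ₃ b₃ →
    ∀ s ∈ Set.Icc a₃ b₃, ∃ u : ℝ,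
      (u ∈ Set.Icc a₁ b₁ ∧ dist (γ₃ s) (γ₁ u) ≤ δ) ∨
      (u ∈ Set.Icc a₂ b₂ ∧ dist (γ₃ s) (γ₂ u) ≤ δ)

/-- `Y` is `K`-quasiconvex: geodesics with endpoints on `Y` lie in the `K`-neighborhood
of `Y`. -/
def QuasiconvexSubset {X : Type*} [MetricSpace X] (K : ℝ) (Y : Set X) : Prop :=
  ∀ (γ : ℝ → X) (a b : ℝ), IsGeodesicSeg γ a b → γ a ∈ Y → γ b ∈ Y →
    ∀ t ∈ Set.Icc a b, infDist (γ t) Y ≤ K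

/-- Bounded geodesic image property for hyperbolic spaces: for a `K`-quasiconvex subset `Y`
of a `δ`-hyperbolic geodesic space, there is `r > 0` (depending only on `δ`, `K`) such that
whenever `d(p_Y(x), p_Y(y)) > r`, every geodesic from `x` to `y` meets the `r`-neighborhood
of `Y`; here `p_Y` is any closest point projection. -/
theorem bounded_geodesic_image_hyperbolic (δ K : ℝ) (hδ : 0 ≤ δ) (hK : 0 ≤ K) :
    ∃ r : ℝ, 0 < r ∧
      ∀ (X : Type) [MetricSpace X], GeodesicSpace' X → DeltaHyperbolic X δ →
        ∀ (Y : Set X), Y.Nonempty → QuasiconvexSubset K Y →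
        ∀ p : X → X, (∀ x, p x ∈ Y ∧ dist x (p x) ≤ infDist x Y + 1) →
        ∀ x y : X, r < dist (p x) (p y) →
          ∀ (γ : ℝ → X) (a b : ℝ), IsGeodesicSeg γ a b → γ a = x → γ b = y →
            ∃ t ∈ Set.Icc a b, infDist (γ t) Y ≤ r := by
  refine ⟨8*δ + 2*K + 3, by positivity, ?_⟩
  intro X _ hgeo hhyp Y hY hqc p hp x y hd γ a b hγ hγa hγb
  by_contra hcon
  push_neg at hcon
  obtain ⟨σ, hσ, hσ0, hσ1⟩ := hgeo (p x) (p y)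
  obtain ⟨σ₁, hσ₁, hσ₁0, hσ₁1⟩ := hgeo (p x) x
  obtain ⟨τ, hτ, hτ0, hτ1⟩ := hgeo x (p y)
  obtain ⟨σ₂, hσ₂, hσ₂0, hσ₂1⟩ := hgeo y (p y)
  set d := dist (p x) (p y) with hdd
  have hr0 : (0:ℝ) < 8*δ + 2*K + 3 := by positivity
  have hd0 : 0 < d := lt_trans hr0 hd
  have hm_mem : d/2 ∈ Set.Icc (0:ℝ) d := ⟨by linarith, by linarith⟩
  set m := σ (d/2) with hm
  -- m is K-close to Y by quasiconvexity
  have hmY : infDist m Y ≤ K := by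
    have := hqc σ 0 d hσ (by rw [hσ0]; exact (hp x).1) (by rw [hσ1]; exact (hp y).1)
      (d/2) hm_mem
    exact this
  have hIcc0d : (0:ℝ) ∈ Set.Icc (0:ℝ) d := ⟨le_refl 0, hd0.le⟩
  have hIccdd : d ∈ Set.Icc (0:ℝ) d := ⟨hd0.le, le_refl d⟩
  have hmpx : dist m (p x) = d/2 := by
    have h := hσ.2 (d/2) hm_mem 0 hIcc0d
    rw [hσ0] at h
    rw [hm, h, abs_of_nonneg (by linarith)]
    ring
  have hmpy : dist m (p y) = d/2 := by
    have h := hσ.2 (d/2) hm_mem d hIccdd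
    rw [hσ1] at h
    rw [hm, h, abs_of_nonpos (by linarith)]
    ring
  -- Triangle A: sides σ₁ (px → x), τ (x → py), σ (px → py)
  obtain ⟨u, hu⟩ := hhyp σ₁ τ σ 0 (dist (p x) x) 0 (dist x (p y)) 0 d hσ₁ hτ hσ
    (by rw [hσ₁0, hσ0]) (by rw [hσ₁1, hτ0]) (by rw [hτ1, hσ1]) (d/2) hm_mem
  rcases hu with ⟨⟨hu0, hu1⟩, hum⟩ | ⟨⟨hu0, hu1⟩, hum⟩
  · -- m is δ-close to σ₁ u on the geodesic from px to x: contradiction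
    -- dist (σ₁ u) (p x) = u ≤ infDist (σ₁ u) Y + 1
    have hupx : dist (σ₁ u) (p x) = u := by
      have h := hσ₁.2 u ⟨hu0, hu1⟩ 0 ⟨le_refl 0, hσ₁.1⟩
      rw [hσ₁0] at h
      rw [h, sub_zero, abs_of_nonneg hu0]
    have hux : dist (σ₁ u) x = dist (p x) x - u := by
      have h := hσ₁.2 u ⟨hu0, hu1⟩ (dist (p x) x) ⟨hσ₁.1, le_refl _⟩
      rw [hσ₁1] at h
      rw [h, abs_of_nonpos (by linarith)]
      ring
    have h1 : infDist x Y ≤ dist x (σ₁ u) + infDist (σ₁ u) Y :=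
      infDist_le_infDist_add_dist.trans_eq (by rw [dist_comm]; ring)
    have h2 : dist x (p x) ≤ infDist x Y + 1 := (hp x).2
    have h3 : infDist (σ₁ u) Y ≤ dist (σ₁ u) m + K := by
      have := infDist_le_infDist_add_dist (x := σ₁ u) (y := m) (s := Y)
      linarith [this, hmY]
    have h4 : dist (σ₁ u) m ≤ δ := by rw [dist_comm]; exact hum
    have h5 : dist x (σ₁ u) = dist (p x) x - u := by rw [dist_comm]; exact hux
    have h6 : dist x (p x) = dist (p x) x := dist_comm x (p x)
    -- u ≤ infDist (σ₁ u) Y + 1 ≤ δ + K + 1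
    have h7 : u ≤ δ + K + 1 := by linarith
    have h8 : d/2 ≤ dist m (σ₁ u) + dist (σ₁ u) (p x) := by
      rw [← hmpx]; exact dist_triangle _ _ _
    have : d ≤ 4*δ + 2*K + 2 := by
      rw [hupx] at h8; linarith [hum]
    linarith
  · -- m is δ-close to w = τ u; analyze w via Triangle B: sides γ (x → y), σ₂ (y → py), τ
    obtain ⟨v, hv⟩ := hhyp γ σ₂ τ a b 0 (dist y (p y)) 0 (dist x (p y)) hγ hσ₂ hτ
      (by rw [hγa, hτ0]) (by rw [hγb, hσ₂0]) (by rw [hσ₂1, hτ1]) u ⟨hu0, hu1⟩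
    rcases hv with ⟨hv0, hvw⟩ | ⟨⟨hv0, hv1⟩, hvw⟩
    · -- point of γ is 2δ-close to m, hence (2δ+K)-close to Y: contradicts hcon
      have : infDist (γ v) Y ≤ 2*δ + K := by
        have h1 : infDist (γ v) Y ≤ infDist m Y + dist (γ v) m :=
          infDist_le_infDist_add_dist
        have h2 : dist (γ v) m ≤ dist (γ v) (τ u) + dist (τ u) m := dist_triangle _ _ _
        rw [dist_comm (γ v) (τ u)] at h2
        rw [dist_comm (τ u) m] at h2
        linarith [hmY]
      have := hcon v hv0
      linarith
    · -- τ u is δ-close to σ₂ v on the geodesic from y to py: contradiction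
      have hvpy : dist (σ₂ v) (p y) = dist y (p y) - v := by
        have h := hσ₂.2 v ⟨hv0, hv1⟩ (dist y (p y)) ⟨hσ₂.1, le_refl _⟩
        rw [hσ₂1] at h
        rw [h, abs_of_nonpos (by linarith)]
        ring
      have hvy : dist (σ₂ v) y = v := by
        have h := hσ₂.2 v ⟨hv0, hv1⟩ 0 ⟨le_refl 0, hσ₂.1⟩
        rw [hσ₂0] at h
        rw [h, sub_zero, abs_of_nonneg hv0]
      have h1 : infDist y Y ≤ dist y (σ₂ v) + infDist (σ₂ v) Y :=
        infDist_le_infDist_add_dist.trans_eq (by rw [dist_comm]; ring)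
      have h2 : dist y (p y) ≤ infDist y Y + 1 := (hp y).2
      have h3 : infDist (σ₂ v) Y ≤ dist (σ₂ v) m + K := by
        have := infDist_le_infDist_add_dist (x := σ₂ v) (y := m) (s := Y)
        linarith [this, hmY]
      have h4 : dist (σ₂ v) m ≤ dist (σ₂ v) (τ u) + dist (τ u) m := dist_triangle _ _ _
      rw [dist_comm (σ₂ v) (τ u)] at h4
      rw [dist_comm (τ u) m] at h4
      have h5 : dist y (σ₂ v) = v := by rw [dist_comm]; exact hvy
      -- dist (σ₂ v) (p y) ≤ infDist (σ₂ v) Y + 1 ≤ 2δ + K + 1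
      have h6 : dist (σ₂ v) (p y) ≤ 2*δ + K + 1 := by
        rw [hvpy]; linarith [hvw, hum]
      have h7 : d/2 ≤ dist m (τ u) + dist (τ u) (σ₂ v) + dist (σ₂ v) (p y) := by
        rw [← hmpy]
        calc dist m (p y) ≤ dist m (σ₂ v) + dist (σ₂ v) (p y) := dist_triangle _ _ _
          _ ≤ dist m (τ u) + dist (τ u) (σ₂ v) + dist (σ₂ v) (p y) := by
              linarith [dist_triangle m (τ u) (σ₂ v)]
      have : d ≤ 8*δ + 2*K + 2 := by linarith [hum, hvw]
      linarith
end

section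
/- Let X be a quasi-geodesic metric space and Y ⊆ X a Q-strongly quasiconvex subset. Then Y equipped with the induced metric from X is a (K',L')-quasi-geodesic metric space, where K' and L' depend only on Q and the quasi-geodesic constants (K,L) of X. -/
open Metric

/-- A `Q`-strongly quasiconvex subset of a `(K,L)`-quasi-geodesic space, equipped with the
induced metric, is a `(K',L')`-quasi-geodesic metric space with `K'`, `L'` depending only
on `Q`, `K`, `L`. -/
theorem stronglyQuasiconvex_is_quasiGeodesicSpace (Q : ℝ → ℝ → ℝ) (K L : ℝ)
    (hK : 1 ≤ K) (hL : 0 ≤ L) :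
    ∃ K' L' : ℝ, 1 ≤ K' ∧ 0 ≤ L' ∧
      ∀ (X : Type) [MetricSpace X], IsQuasiGeodesicSpace X K L →
        ∀ Y : Set X, StronglyQuasiconvex Q Y →
          IsQuasiGeodesicSpace (↥Y) K' L' := by
  set M : ℝ := max (Q K L) 0 + 1 with hM
  have hM0 : 0 ≤ M := by positivity
  refine ⟨K, L + 2 * M, hK, by linarith, ?_⟩
  intro X _ hX Y hY x y
  obtain ⟨γ, a, b, hab, hγ, hγa, hγb⟩ := hX (x : X) (y : X)
  have hne : Y.Nonempty := ⟨x, x.2⟩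
  -- for each t in [a,b], choose a point of Y close to γ t
  have hclose : ∀ t ∈ Set.Icc a b, ∃ p : Y, dist (γ t) (p : X) ≤ M := by
    intro t ht
    have h1 : infDist (γ t) Y ≤ Q K L :=
      hY K L hK hL γ a b hab hγ (by rw [hγa]; exact x.2) (by rw [hγb]; exact y.2) t ht
    have h2 : infDist (γ t) Y < M := by
      have : Q K L ≤ max (Q K L) 0 := le_max_left _ _
      linarith
    obtain ⟨p, hp, hplt⟩ := (infDist_lt_iff hne).mp h2
    exact ⟨⟨p, hp⟩, le_of_lt hplt⟩
  classical
  -- the pushed path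
  set γ' : ℝ → Y := fun t =>
    if t = a then x else if t = b then y
    else if h : t ∈ Set.Icc a b then (hclose t h).choose else x with hγ'
  have hkey : ∀ t ∈ Set.Icc a b, dist (γ t) ((γ' t : Y) : X) ≤ M := by
    intro t ht
    by_cases hta : t = a
    · simp only [hγ', hta, if_pos rfl]
      rw [hγa]
      simpa using hM0
    by_cases htb : t = b
    · subst htb
      simp only [hγ']
      rw [if_neg hta, if_pos trivial, hγb]
      simpa using hM0
    · simp only [hγ', if_neg hta, if_neg htb, dif_pos ht]
      exact (hclose t ht).choose_spec
  refine ⟨γ', a, b, hab, ?_, by simp [hγ'], ?_⟩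
  · intro s hs t ht
    have hds : dist (γ s) ((γ' s : Y) : X) ≤ M := hkey s hs
    have hdt : dist (γ t) ((γ' t : Y) : X) ≤ M := hkey t ht
    obtain ⟨hlow, hhigh⟩ := hγ s hs t ht
    have hdd : dist (γ' s) (γ' t) = dist ((γ' s : Y) : X) ((γ' t : Y) : X) := rfl
    constructor
    · -- lower bound
      have h1 : dist (γ s) (γ t) ≤
          dist (γ s) ((γ' s : Y) : X) + dist ((γ' s : Y) : X) ((γ' t : Y) : X)
          + dist ((γ' t : Y) : X) (γ t) := dist_triangle4 _ _ _ _
      have h2 : dist ((γ' t : Y) : X) (γ t) ≤ M := by rw [dist_comm]; exact hdt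
      rw [hdd]; linarith
    · -- upper bound
      have h1 : dist ((γ' s : Y) : X) ((γ' t : Y) : X) ≤
          dist ((γ' s : Y) : X) (γ s) + dist (γ s) (γ t) + dist (γ t) ((γ' t : Y) : X) :=
        dist_triangle4 _ _ _ _
      have h2 : dist ((γ' s : Y) : X) (γ s) ≤ M := by rw [dist_comm]; exact hds
      rw [hdd]; linarith
  · by_cases hba : b = a
    · simp [hγ', hba]
      exact Subtype.ext (by rw [← hγa, ← hγb, hba])
    · simp [hγ', hba]
end

section
/- Let {H₁, …, Hₙ} be an almost malnormal collection of subgroups of a finitely generated group G and B ≥ 0. Then for all g₁, g₂ ∈ G, if g₁H_i ≠ g₂H_j (as cosets), the diameter of N_B(g₁H_i) ∩ N_B(g₂H_j) in the word metric is finite. -/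
/-- The word metric on a group `G` with respect to a generating set `S`. -/
noncomputable def wordDist {G : Type*} [Group G] (S : Set G) (g h : G) : ℝ :=
  sInf { r : ℝ | ∃ w : List G, (∀ x ∈ w, x ∈ S ∨ x⁻¹ ∈ S) ∧ w.prod = g⁻¹ * h ∧
    (w.length : ℝ) = r }

/-- The `B`-neighborhood of a subset of `G` in the word metric. -/
def wordNbhd {G : Type*} [Group G] (S : Set G) (B : ℝ) (A : Set G) : Set G :=
  { x : G | ∃ a ∈ A, wordDist S x a ≤ B }

/-!
A point `x` of `N_B(g₁H) ∩ N_B(g₂K)` can be written `x = g₁ h a⁻¹ = g₂ k b⁻¹` with `h ∈ H`,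
`k ∈ K` and `a`, `b` in the finite ball `D` of radius `B`, so that with `g = g₁⁻¹ g₂` the
element `h⁻¹ g k = a⁻¹ b` lies in the finite set `D⁻¹ D`. For a fixed value of `h⁻¹ g k`,
attained at some `h₀`, the map `h ↦ h h₀⁻¹` embeds the possible `h` into `H ∩ g K g⁻¹`, which
almost malnormality makes finite unless the two cosets coincide. Hence there are only finitely
many `h`, so the intersection is finite, and a finite set has bounded diameter.
-/

open scoped Pointwise

section WordMetric

variable {G : Type*} [Group G] {S : Set G}

theorem wordDist_one_inv_mul (g h : G) : wordDist S 1 (g⁻¹ * h) = wordDist S g h := by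
  simp [wordDist]

theorem exists_word_prod_eq (hSgen : Subgroup.closure S = ⊤) (g : G) :
    ∃ w : List G, (∀ x ∈ w, x ∈ S ∨ x⁻¹ ∈ S) ∧ w.prod = g := by
  have hg : g ∈ (Subgroup.closure S).toSubmonoid := by simp [hSgen]
  rw [Subgroup.closure_toSubmonoid] at hg
  exact Submonoid.exists_list_of_mem_closure hg

theorem isLeast_wordDist (hSgen : Subgroup.closure S = ⊤) (g h : G) :
    IsLeast {r : ℝ | ∃ w : List G, (∀ x ∈ w, x ∈ S ∨ x⁻¹ ∈ S) ∧ w.prod = g⁻¹ * h ∧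
      (w.length : ℝ) = r} (wordDist S g h) := by
  classical
  have hlen : ∃ n : ℕ, ∃ w : List G, (∀ x ∈ w, x ∈ S ∨ x⁻¹ ∈ S) ∧ w.prod = g⁻¹ * h ∧
      w.length = n := by
    obtain ⟨w, hw, hprod⟩ := exists_word_prod_eq hSgen (g⁻¹ * h)
    exact ⟨w.length, w, hw, hprod, rfl⟩
  have hleast : IsLeast {r : ℝ | ∃ w : List G, (∀ x ∈ w, x ∈ S ∨ x⁻¹ ∈ S) ∧
      w.prod = g⁻¹ * h ∧ (w.length : ℝ) = r} (Nat.find hlen) := by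
    obtain ⟨w, hw, hprod, hw_len⟩ := Nat.find_spec hlen
    refine ⟨⟨w, hw, hprod, by rw [hw_len]⟩, ?_⟩
    rintro _ ⟨v, hv, hv_prod, rfl⟩
    exact_mod_cast Nat.find_min' hlen ⟨v, hv, hv_prod, rfl⟩
  rwa [wordDist, hleast.csInf_eq]

theorem finite_setOf_wordDist_le (hSfin : S.Finite) (hSgen : Subgroup.closure S = ⊤)
    (g : G) (r : ℝ) : {h : G | wordDist S g h ≤ r}.Finite := by
  have : Finite ↥(S ∪ S⁻¹) := (hSfin.union hSfin.inv).to_subtype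
  refine (((List.finite_length_le ↥(S ∪ S⁻¹) ⌊r⌋₊).image
    fun l => (l.map Subtype.val).prod).image (g * ·)).subset ?_
  intro h hh
  obtain ⟨⟨w, hw, hprod, hw_len⟩, -⟩ := isLeast_wordDist hSgen g h
  have hw_le : w.length ≤ ⌊r⌋₊ := Nat.le_floor (hw_len ▸ hh)
  have hw' : ∀ x ∈ w, x ∈ S ∪ S⁻¹ := hw
  exact ⟨g⁻¹ * h, ⟨w.attachWith _ hw', by simpa using hw_le, by simpa using hprod⟩, by simp⟩

end WordMetric

section CosetIntersection

variable {G : Type*} [Group G]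

theorem finite_setOf_inv_mul_mul_eq {H K : Subgroup G} {g : G}
    (hfin : ((H : Set G) ∩ (fun x => g * x * g⁻¹) '' (K : Set G)).Finite) (c : G) :
    {h ∈ (H : Set G) | ∃ k ∈ K, h⁻¹ * g * k = c}.Finite := by
  rcases Set.eq_empty_or_nonempty {h ∈ (H : Set G) | ∃ k ∈ K, h⁻¹ * g * k = c} with
    hempty | ⟨h₀, hh₀, k₀, hk₀, rfl⟩
  · rw [hempty]
    exact Set.finite_empty
  refine (hfin.image (· * h₀)).subset ?_
  rintro h ⟨hh, k, hk, hc⟩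
  have h_eq : h = g * k * (h₀⁻¹ * g * k₀)⁻¹ :=
    eq_mul_inv_of_mul_eq (inv_mul_eq_iff_eq_mul.mp (by rw [← mul_assoc, hc])).symm
  refine ⟨h * h₀⁻¹, ⟨mul_mem hh (inv_mem hh₀), k * k₀⁻¹, mul_mem hk (inv_mem hk₀), ?_⟩, by simp⟩
  rw [h_eq]
  group

theorem finite_setOf_inv_mul_mul_mem {H K : Subgroup G} {g : G}
    (hfin : ((H : Set G) ∩ (fun x => g * x * g⁻¹) '' (K : Set G)).Finite)
    {F : Set G} (hF : F.Finite) :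
    {h ∈ (H : Set G) | ∃ k ∈ K, h⁻¹ * g * k ∈ F}.Finite :=
  (hF.biUnion fun c _ => finite_setOf_inv_mul_mul_eq hfin c).subset
    fun _ ⟨hh, k, hk, hkF⟩ => Set.mem_biUnion hkF ⟨hh, k, hk, rfl⟩

theorem finite_wordNbhd_inter_wordNbhd {S : Set G} (hSfin : S.Finite)
    (hSgen : Subgroup.closure S = ⊤) {H K : Subgroup G} {g₁ g₂ : G}
    (hfin : ((H : Set G) ∩
      (fun x => g₁⁻¹ * g₂ * x * (g₁⁻¹ * g₂)⁻¹) '' (K : Set G)).Finite) (B : ℝ) :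
    (wordNbhd S B ((fun x => g₁ * x) '' (H : Set G)) ∩
      wordNbhd S B ((fun x => g₂ * x) '' (K : Set G))).Finite := by
  set D := {a : G | wordDist S 1 a ≤ B}
  have hD : D.Finite := finite_setOf_wordDist_le hSfin hSgen 1 B
  refine ((finite_setOf_inv_mul_mul_mem hfin (hD.inv.mul hD)).image2
    (fun h a => g₁ * h * a⁻¹) hD).subset ?_
  rintro x ⟨⟨_, ⟨h, hh, rfl⟩, hxh⟩, ⟨_, ⟨k, hk, rfl⟩, hxk⟩⟩
  rw [← wordDist_one_inv_mul] at hxh hxk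
  refine ⟨h, ⟨hh, k, hk, ?_⟩, x⁻¹ * (g₁ * h), hxh, by group⟩
  exact ⟨(x⁻¹ * (g₁ * h))⁻¹, Set.inv_mem_inv.mpr hxh, x⁻¹ * (g₂ * k), hxk, by group⟩

end CosetIntersection

theorem malnormal_coset_neighborhoods_bounded_general {G : Type*} [Group G]
    (S : Set G) (hSfin : S.Finite) (hSgen : Subgroup.closure S = ⊤)
    (n : ℕ) (H : Fin n → Subgroup G)
    (hmal : ∀ (g : G) (i j : Fin n),
      Set.Infinite ((H i : Set G) ∩ ((fun x => g * x * g⁻¹) '' (H j : Set G))) →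
      i = j ∧ g ∈ H i)
    (B : ℝ) :
    ∀ (g₁ g₂ : G) (i j : Fin n),
      (fun x => g₁ * x) '' (H i : Set G) ≠ (fun x => g₂ * x) '' (H j : Set G) →
      ∃ R : ℝ,
        ∀ x ∈ wordNbhd S B ((fun x => g₁ * x) '' (H i : Set G)) ∩
              wordNbhd S B ((fun x => g₂ * x) '' (H j : Set G)),
        ∀ y ∈ wordNbhd S B ((fun x => g₁ * x) '' (H i : Set G)) ∩
              wordNbhd S B ((fun x => g₂ * x) '' (H j : Set G)),
          wordDist S x y ≤ R := by
  intro g₁ g₂ i j hne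
  have hfin : ((H i : Set G) ∩
      (fun x => g₁⁻¹ * g₂ * x * (g₁⁻¹ * g₂)⁻¹) '' (H j : Set G)).Finite := by
    by_contra hinf
    obtain ⟨rfl, hg⟩ := hmal _ i j hinf
    exact hne ((leftCoset_eq_iff (H i)).mpr hg)
  have hX := finite_wordNbhd_inter_wordNbhd hSfin hSgen hfin B
  obtain ⟨R, hR⟩ := (hX.image2 (wordDist S) hX).bddAbove
  exact ⟨R, fun x hx y hy => hR (Set.mem_image2_of_mem hx hy)⟩

/-- If `{H i}` is an almost malnormal collection of subgroups of a finitely generated group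
`G` and `B ≥ 0`, then for distinct cosets `g₁ • H i ≠ g₂ • H j` the intersection
`N_B(g₁ H i) ∩ N_B(g₂ H j)` has finite diameter in the word metric. -/
theorem malnormal_coset_neighborhoods_bounded {G : Type*} [Group G]
    (S : Set G) (hSfin : S.Finite) (hSgen : Subgroup.closure S = ⊤)
    (n : ℕ) (H : Fin n → Subgroup G)
    (hmal : ∀ (g : G) (i j : Fin n),
      Set.Infinite ((H i : Set G) ∩ ((fun x => g * x * g⁻¹) '' (H j : Set G))) →
      i = j ∧ g ∈ H i)
    (B : ℝ) (hB : 0 ≤ B) :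
    ∀ (g₁ g₂ : G) (i j : Fin n),
      (fun x => g₁ * x) '' (H i : Set G) ≠ (fun x => g₂ * x) '' (H j : Set G) →
      ∃ R : ℝ,
        ∀ x ∈ wordNbhd S B ((fun x => g₁ * x) '' (H i : Set G)) ∩
              wordNbhd S B ((fun x => g₂ * x) '' (H j : Set G)),
        ∀ y ∈ wordNbhd S B ((fun x => g₁ * x) '' (H i : Set G)) ∩
              wordNbhd S B ((fun x => g₂ * x) '' (H j : Set G)),
          wordDist S x y ≤ R :=
  malnormal_coset_neighborhoods_bounded_general S hSfin hSgen n H hmal B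
end
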